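/- Let X₁, X₂, … be independent identically distributed random variables, each taking the value 1000 with probability 1/2 and the value 0 with probability 1/2, and let Bₙ = X₁ + ⋯ + Xₙ. Then there exists N such that for every n ≥ N, E[ln(1 + Bₙ)] > ln(1 + 400·n). That is, with the logarithmic utility-for-cash u(x) = ln(1 + x), for all sufficiently large n the decision maker prefers choosing Reward B in every one of the n simultaneous bets (total random reward Bₙ) to choosing Reward A in every bet (sure total reward 400n), even though for a single bet u(400) > (1/2)·u(1000) + (1/2)·u(0), i.e., the decision maker prefers Reward A in the one-stage problem. -/

import Mathlib

/-! Chebyshev's inequality gives `Bₙ ≥ 450 n` with probability at least `1 - 100 / n`, so Markov's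
inequality for the nonnegative variable `log (1 + Bₙ)` bounds its mean below by
`(1 - 100 / n) log (1 + 450 n)`. The gap `log (1 + 450 n) - log (1 + 400 n)` stays above
`log (451 / 401) > 0`, while `(100 / n) log (1 + 450 n) → 0`. -/

open MeasureTheory ProbabilityTheory Filter Finset Real Topology

section TwoPoint

variable {Ω : Type*} [MeasurableSpace Ω] {μ : Measure Ω} {X : Ω → ℝ} {c p : ℝ}

lemma ae_eq_or_eq_of_measure_add_eq_one [IsProbabilityMeasure μ] (hX : Measurable X) {a b : ℝ}
    (hab : a ≠ b) (h : μ {ω | X ω = a} + μ {ω | X ω = b} = 1) :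
    ∀ᵐ ω ∂μ, X ω = a ∨ X ω = b := by
  have hdisj : Disjoint {ω | X ω = a} {ω | X ω = b} :=
    Set.disjoint_left.2 fun ω ha hb => hab (ha.symm.trans hb)
  have hb : MeasurableSet {ω | X ω = b} := hX (measurableSet_singleton b)
  have hab' : MeasurableSet {ω | X ω = a ∨ X ω = b} := (hX (measurableSet_singleton a)).union hb
  rw [ae_iff_measure_eq hab'.nullMeasurableSet, Set.ofPred_or, measure_union hdisj hb, h,
    measure_univ]

lemma memLp_two_of_ae_eq_zero_or_eq [IsFiniteMeasure μ] (hX : Measurable X)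
    (hv : ∀ᵐ ω ∂μ, X ω = 0 ∨ X ω = c) : MemLp X 2 μ :=
  MemLp.of_bound hX.aestronglyMeasurable |c| <| by
    filter_upwards [hv] with ω hω
    rcases hω with h | h <;> simp [h]

lemma integral_eq_mul_of_ae_eq_zero_or_eq (hX : Measurable X)
    (hv : ∀ᵐ ω ∂μ, X ω = 0 ∨ X ω = c) (hp : μ.real {ω | X ω = c} = p) : μ[X] = p * c := by
  have hind : X =ᵐ[μ] {ω | X ω = c}.indicator fun _ => c := by
    filter_upwards [hv] with ω hω
    rcases hω with h | h <;> simp [Set.indicator_apply, h, eq_comm]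
  have hc : MeasurableSet {ω | X ω = c} := hX (measurableSet_singleton c)
  rw [integral_congr_ae hind, integral_indicator_const _ hc, hp, smul_eq_mul]

lemma variance_eq_mul_of_ae_eq_zero_or_eq [IsProbabilityMeasure μ] (hX : Measurable X)
    (hv : ∀ᵐ ω ∂μ, X ω = 0 ∨ X ω = c) (hp : μ.real {ω | X ω = c} = p) :
    variance X μ = p * (1 - p) * c ^ 2 := by
  have hsq : X ^ 2 =ᵐ[μ] fun ω => c * X ω := by
    filter_upwards [hv] with ω hω
    rcases hω with h | h <;> simp [h, sq]
  rw [variance_eq_sub (memLp_two_of_ae_eq_zero_or_eq hX hv), integral_congr_ae hsq,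
    integral_const_mul, integral_eq_mul_of_ae_eq_zero_or_eq hX hv hp]
  ring

end TwoPoint

section Tail

variable {Ω : Type*} [MeasurableSpace Ω] {μ : Measure Ω} {Y : Ω → ℝ} {t : ℝ}

lemma one_sub_variance_div_sq_le_measureReal_ge [IsProbabilityMeasure μ] (hY : MemLp Y 2 μ)
    (ht : t < μ[Y]) : 1 - variance Y μ / (μ[Y] - t) ^ 2 ≤ μ.real {ω | t ≤ Y ω} := by
  have hcheb : μ.real {ω | μ[Y] - t ≤ |Y ω - μ[Y]|} ≤ variance Y μ / (μ[Y] - t) ^ 2 :=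
    ENNReal.toReal_le_of_le_ofReal (div_nonneg (variance_nonneg _ _) (sq_nonneg _))
      (meas_ge_le_variance_div_sq hY (sub_pos.2 ht))
  have hcover : Set.univ ⊆ {ω | t ≤ Y ω} ∪ {ω | μ[Y] - t ≤ |Y ω - μ[Y]|} := by
    intro ω _
    by_cases h : t ≤ Y ω
    · exact Or.inl h
    · exact Or.inr ((by linarith : μ[Y] - t ≤ -(Y ω - μ[Y])).trans (neg_le_abs _))
  have := (measureReal_mono (μ := μ) hcover).trans (measureReal_union_le _ _)
  rw [probReal_univ] at this
  linarith

lemma integrable_log_one_add (hY : Integrable Y μ) (hY0 : 0 ≤ᵐ[μ] Y) :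
    Integrable (fun ω => log (1 + Y ω)) μ := by
  refine hY.mono (measurable_log.comp_aemeasurable
    (aemeasurable_const.add hY.aemeasurable)).aestronglyMeasurable ?_
  filter_upwards [hY0] with ω (hω : 0 ≤ Y ω)
  rw [norm_of_nonneg (log_nonneg (by linarith)), norm_of_nonneg hω]
  linarith [log_le_sub_one_of_pos (by linarith : 0 < 1 + Y ω)]

lemma log_one_add_mul_measureReal_ge_le_integral [IsFiniteMeasure μ] (ht : 0 ≤ t)
    (hY : Integrable Y μ) (hY0 : 0 ≤ᵐ[μ] Y) :
    log (1 + t) * μ.real {ω | t ≤ Y ω} ≤ ∫ ω, log (1 + Y ω) ∂μ := calc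
  _ ≤ log (1 + t) * μ.real {ω | log (1 + t) ≤ log (1 + Y ω)} :=
    mul_le_mul_of_nonneg_left
      (measureReal_mono fun ω (h : t ≤ Y ω) => log_le_log (by linarith) (by linarith))
      (log_nonneg (by linarith))
  _ ≤ ∫ ω, log (1 + Y ω) ∂μ :=
    mul_meas_ge_le_integral_of_nonneg
      (by filter_upwards [hY0] with ω (hω : 0 ≤ Y ω) using log_nonneg (by linarith))
      (integrable_log_one_add hY hY0) _

end Tail

lemma tendsto_log_one_add_mul_div_atTop {b : ℝ} (hb : 0 < b) :
    Tendsto (fun n : ℕ => log (1 + b * n) / n) atTop (𝓝 0) := by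
  have hlin : Tendsto (fun n : ℕ => 1 + b * n) atTop atTop :=
    tendsto_atTop_add_const_left _ _ (tendsto_natCast_atTop_atTop.const_mul_atTop hb)
  refine ((tendsto_pow_log_div_mul_add_atTop b⁻¹ (-b⁻¹) 1 (inv_pos.2 hb).ne').comp hlin).congr
    fun n => ?_
  simp only [Function.comp_apply, pow_one]
  congr 1
  field_simp
  ring

lemma eventually_log_one_add_mul_lt {a b : ℝ} (ha : 0 ≤ a) (hab : a < b) (C : ℝ) :
    ∀ᶠ n : ℕ in atTop, log (1 + a * n) < (1 - C / n) * log (1 + b * n) := by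
  have hb : 0 < b := ha.trans_lt hab
  have hgap : ∀ n : ℕ, 1 ≤ n → log (1 + a * n) + log ((1 + b) / (1 + a)) ≤ log (1 + b * n) := by
    intro n hn
    have hn' : (1 : ℝ) ≤ n := by exact_mod_cast hn
    rw [← log_mul (by positivity) (by positivity), mul_div_assoc']
    refine log_le_log (by positivity) ((div_le_iff₀ (by positivity)).2 ?_)
    nlinarith
  have hgap_pos : 0 < log ((1 + b) / (1 + a)) :=
    log_pos ((one_lt_div (by positivity)).2 (by linarith))
  have hsmall : ∀ᶠ n : ℕ in atTop, C * (log (1 + b * n) / n) < log ((1 + b) / (1 + a)) := by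
    have h := (tendsto_log_one_add_mul_div_atTop hb).const_mul C
    rw [mul_zero] at h
    exact h.eventually_lt_const hgap_pos
  filter_upwards [hsmall, eventually_ge_atTop 1] with n hsmall hn
  have hsplit : (1 - C / n) * log (1 + b * n) = log (1 + b * n) - C * (log (1 + b * n) / n) := by
    ring
  linarith [hgap n hn]

section Sum

variable {Ω ι : Type*} [MeasurableSpace Ω] {μ : Measure Ω} [IsProbabilityMeasure μ]
  {X : ι → Ω → ℝ} {s : Finset ι} {c p t : ℝ}

lemma one_sub_div_sq_le_measureReal_sum_ge (hindep : Set.Pairwise ↑s fun i j => X i ⟂ᵢ[μ] X j)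
    (hX : ∀ i ∈ s, Measurable (X i)) (hv : ∀ i ∈ s, ∀ᵐ ω ∂μ, X i ω = 0 ∨ X i ω = c)
    (hp : ∀ i ∈ s, μ.real {ω | X i ω = c} = p) (ht : t < #s * (p * c)) :
    1 - #s * (p * (1 - p) * c ^ 2) / (#s * (p * c) - t) ^ 2 ≤
      μ.real {ω | t ≤ ∑ i ∈ s, X i ω} := by
  have hmem : ∀ i ∈ s, MemLp (X i) 2 μ := fun i hi =>
    memLp_two_of_ae_eq_zero_or_eq (hX i hi) (hv i hi)
  have hmean : μ[∑ i ∈ s, X i] = #s * (p * c) := by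
    simp only [Finset.sum_apply]
    rw [integral_finsetSum s fun i hi => (hmem i hi).integrable one_le_two,
      Finset.sum_congr rfl fun i hi => integral_eq_mul_of_ae_eq_zero_or_eq (hX i hi) (hv i hi)
        (hp i hi), sum_const, nsmul_eq_mul]
  have hvar : variance (∑ i ∈ s, X i) μ = #s * (p * (1 - p) * c ^ 2) := by
    rw [IndepFun.variance_sum hmem hindep, Finset.sum_congr rfl fun i hi =>
      variance_eq_mul_of_ae_eq_zero_or_eq (hX i hi) (hv i hi) (hp i hi), sum_const, nsmul_eq_mul]
  have h := one_sub_variance_div_sq_le_measureReal_ge (memLp_finsetSum' s hmem) (hmean ▸ ht)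
  rw [hmean, hvar] at h
  simpa only [Finset.sum_apply] using h

lemma one_sub_div_sq_mul_log_le_integral_log_one_add_sum
    (hindep : Set.Pairwise ↑s fun i j => X i ⟂ᵢ[μ] X j)
    (hX : ∀ i ∈ s, Measurable (X i)) (hv : ∀ i ∈ s, ∀ᵐ ω ∂μ, X i ω = 0 ∨ X i ω = c)
    (hp : ∀ i ∈ s, μ.real {ω | X i ω = c} = p) (hc : 0 ≤ c) (ht₀ : 0 ≤ t)
    (ht : t < #s * (p * c)) :
    (1 - #s * (p * (1 - p) * c ^ 2) / (#s * (p * c) - t) ^ 2) * log (1 + t) ≤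
      ∫ ω, log (1 + ∑ i ∈ s, X i ω) ∂μ := by
  have hint : Integrable (fun ω => ∑ i ∈ s, X i ω) μ := integrable_finsetSum s fun i hi =>
    (memLp_two_of_ae_eq_zero_or_eq (hX i hi) (hv i hi)).integrable one_le_two
  have hnonneg : 0 ≤ᵐ[μ] fun ω => ∑ i ∈ s, X i ω := by
    filter_upwards [(eventually_all_finset s).2 hv] with ω hω
    exact sum_nonneg fun i hi => by rcases hω i hi with h | h <;> simp [h, hc]
  calc _ ≤ μ.real {ω | t ≤ ∑ i ∈ s, X i ω} * log (1 + t) :=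
        mul_le_mul_of_nonneg_right (one_sub_div_sq_le_measureReal_sum_ge hindep hX hv hp ht)
          (log_nonneg (by linarith))
    _ ≤ ∫ ω, log (1 + ∑ i ∈ s, X i ω) ∂μ := by
      rw [mul_comm]
      exact log_one_add_mul_measureReal_ge_le_integral ht₀ hint hnonneg

end Sum

theorem log_utility_eventually_prefers_B_general
    {Ω : Type*} [MeasurableSpace Ω] (μ : Measure Ω) [IsProbabilityMeasure μ]
    (X : ℕ → Ω → ℝ) (hmeas : ∀ i, Measurable (X i))
    (hindep : iIndepFun X μ)
    (h1000 : ∀ i, μ {ω | X i ω = 1000} = 1 / 2)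
    (h0 : ∀ i, μ {ω | X i ω = 0} = 1 / 2) :
    (Real.log (1 + 400) >
        (1 / 2) * Real.log (1 + 1000) + (1 / 2) * Real.log (1 + 0)) ∧
    ∃ N : ℕ, ∀ n ≥ N,
      (∫ ω, Real.log (1 + ∑ i ∈ range n, X i ω) ∂μ) >
        Real.log (1 + 400 * n) := by
  refine ⟨?_, ?_⟩
  · have h : log 1001 < log (401 ^ 2) := log_lt_log (by norm_num) (by norm_num)
    rw [log_pow, Nat.cast_ofNat] at h
    norm_num
    linarith
  have hv (i : ℕ) : ∀ᵐ ω ∂μ, X i ω = 0 ∨ X i ω = 1000 :=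
    ae_eq_or_eq_of_measure_add_eq_one (hmeas i) (by norm_num)
      (by rw [h0, h1000, ENNReal.add_halves])
  have hp (i : ℕ) : μ.real {ω | X i ω = 1000} = 1 / 2 := by
    rw [measureReal_def, h1000]
    norm_num
  obtain ⟨N, hN⟩ := eventually_atTop.1 <|
    (eventually_log_one_add_mul_lt (a := 400) (b := 450) (by norm_num) (by norm_num) 100).and
      (eventually_ge_atTop 1)
  refine ⟨N, fun n hn => ?_⟩
  obtain ⟨hlt, hn₁⟩ := hN n hn
  have hn₁' : (1 : ℝ) ≤ n := by exact_mod_cast hn₁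
  have h := one_sub_div_sq_mul_log_le_integral_log_one_add_sum (s := range n) (t := 450 * n)
    (fun i _ j _ hij => hindep.indepFun hij) (fun i _ => hmeas i) (fun i _ => hv i)
    (fun i _ => hp i) (by norm_num) (by positivity) (by rw [card_range]; linarith)
  have hconst : 1 - (n : ℝ) * (1 / 2 * (1 - 1 / 2) * 1000 ^ 2) / (n * (1 / 2 * 1000) - 450 * n) ^ 2
      = 1 - 100 / n := by
    field_simp
    ring
  rw [card_range, hconst] at h
  exact hlt.trans_le h

/-- With `X₁, X₂, …` i.i.d., each `1000` with probability `1/2` and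
`0` with probability `1/2`, and `Bₙ = X₁ + ⋯ + Xₙ`, there exists `N` such that
for all `n ≥ N`, `E[ln(1 + Bₙ)] > ln(1 + 400·n)`: with logarithmic
utility-for-cash the decision maker eventually prefers always choosing the
lottery B in the `n` simultaneous bets over the sure reward `400·n`,
even though in the single-stage problem `u(400) > ½·u(1000) + ½·u(0)`. -/
theorem log_utility_eventually_prefers_B
    {Ω : Type*} [MeasurableSpace Ω] (μ : Measure Ω) [IsProbabilityMeasure μ]
    (X : ℕ → Ω → ℝ) (hmeas : ∀ i, Measurable (X i))
    (hindep : iIndepFun X μ)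
    (hident : ∀ i, IdentDistrib (X i) (X 0) μ μ)
    (h1000 : ∀ i, μ {ω | X i ω = 1000} = 1 / 2)
    (h0 : ∀ i, μ {ω | X i ω = 0} = 1 / 2) :
    (Real.log (1 + 400) >
        (1 / 2) * Real.log (1 + 1000) + (1 / 2) * Real.log (1 + 0)) ∧
    ∃ N : ℕ, ∀ n ≥ N,
      (∫ ω, Real.log (1 + ∑ i ∈ range n, X i ω) ∂μ) >
        Real.log (1 + 400 * n) :=
  log_utility_eventually_prefers_B_general μ X hmeas hindep h1000 h0
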